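/- arXiv:1107.1858 — 7 statements merged into one kernel-verified Lean document; each statement's English description precedes it below -/
import Mathlib

section
/- For integers x and y, |q(x,y)| = 1 if and only if there exist an integer t and a sign ε ∈ {1,-1} such that (x,y) = (ε·f(t), ε·f(t+2)) or (x,y) = (ε·f(t+2), ε·f(t)). -/
def q (x y : ℤ) : ℤ := x ^ 2 + y ^ 2 - 3 * x * y

/-!
By Catalan's identity, `q (fib t) (fib (t + 2)) = fib (t + 1) ^ 2 - fib t * fib (t + 2) = ±1`.
Conversely, `q` is invariant under the Vieta jump `(x, y) ↦ (3x - y, x)`, which maps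
`(fib t, fib (t + 2))` to `(fib (t - 2), fib t)`. A solution `0 < x < y` of `|q x y| = 1`
satisfies `2x ≤ y ≤ 3x`, so the jump yields a smaller solution with `0 ≤ 3x - y ≤ x`, and the
descent ends at `(0, 1)` or `(1, 1)`, both Fibonacci pairs. Solutions have `x * y ≥ 0`, and
`q (-x) (-y) = q x y = q y x` takes care of signs and order.
-/

namespace Int

theorem fib_add_one_eq_add_fib_sub_one (n : ℤ) : fib (n + 1) = fib n + fib (n - 1) := by
  have h := fib_add_two (n - 1)
  rw [show n - 1 + 2 = n + 1 by ring, sub_add_cancel] at h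
  rw [h, add_comm]

theorem fib_add_four (n : ℤ) : fib (n + 4) = 3 * fib (n + 2) - fib n := by
  have h₂ := fib_add_two n
  have h₃ := fib_add_two (n + 1)
  have h₄ := fib_add_two (n + 2)
  ring_nf at h₂ h₃ h₄ ⊢
  linarith

theorem eq_fib_of_rec {f : ℤ → ℤ} (h0 : f 0 = 0) (h1 : f 1 = 1)
    (hrec : ∀ n : ℤ, f (n + 1) = f n + f (n - 1)) : f = fib := by
  have hpair : ∀ n : ℤ, f n = fib n ∧ f (n + 1) = fib (n + 1) := by
    intro n
    induction n using Int.induction_on with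
    | zero => simp [h0, h1]
    | succ n ih =>
      refine ⟨ih.2, ?_⟩
      rw [hrec, fib_add_one_eq_add_fib_sub_one, ih.2, add_sub_cancel_right, ih.1]
    | pred n ih =>
      refine ⟨?_, by rw [sub_add_cancel]; exact ih.1⟩
      have hf := hrec (-(n : ℤ))
      have hfib := fib_add_one_eq_add_fib_sub_one (-(n : ℤ))
      rw [ih.1, ih.2] at hf
      linarith
  exact funext fun n => (hpair n).1

end Int

open Int

theorem q_comm (x y : ℤ) : q x y = q y x := by
  unfold q; ring

theorem q_mul_mul (c x y : ℤ) : q (c * x) (c * y) = c ^ 2 * q x y := by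
  unfold q; ring

theorem q_neg_neg (x y : ℤ) : q (-x) (-y) = q x y := by
  unfold q; ring

/-- The Vieta involution: `3x - y` is the other root of `q(·, x) = q(x, y)`. -/
theorem q_three_mul_sub (x y : ℤ) : q (3 * x - y) x = q x y := by
  unfold q; ring

theorem q_fib (n : ℤ) : q (fib n) (fib (n + 2)) = (-1) ^ n.natAbs := by
  have catalan := fib_add_sq_sub_fib_mul_fib_add_two_mul n 1
  rw [fib_one, mul_one, one_pow, mul_one] at catalan
  unfold q
  linear_combination catalan + (fib (n + 2) - fib n + fib (n + 1)) * fib_add_two n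

theorem mul_nonneg_of_abs_q_eq_one {x y : ℤ} (h : |q x y| = 1) : 0 ≤ x * y := by
  unfold q at h
  nlinarith [abs_le.mp h.le, sq_nonneg (x + y)]

theorem le_three_mul_of_abs_q_eq_one {x y : ℤ} (hx : 0 < x) (hy : 0 < y)
    (h : |q x y| = 1) : y ≤ 3 * x := by
  unfold q at h
  nlinarith [abs_le.mp h.le]

theorem two_mul_le_of_abs_q_eq_one {x y : ℤ} (hx : 0 < x) (hxy : x < y)
    (h : |q x y| = 1) : 2 * x ≤ y := by
  unfold q at h
  nlinarith [abs_le.mp h.le]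

theorem eq_one_of_abs_q_zero_eq_one {y : ℤ} (hy : 0 ≤ y) (h : |q 0 y| = 1) : y = 1 := by
  refine (pow_eq_one_iff_of_nonneg hy two_ne_zero).mp ?_
  simpa [q] using h

theorem eq_one_of_abs_q_self_eq_one {x : ℤ} (hx : 0 ≤ x) (h : |q x x| = 1) : x = 1 := by
  refine (pow_eq_one_iff_of_nonneg hx two_ne_zero).mp ?_
  rwa [q, show x ^ 2 + x ^ 2 - 3 * x * x = -x ^ 2 by ring, abs_neg, abs_sq] at h

theorem exists_fib_of_abs_q_eq_one {x y : ℤ} (hx : 0 ≤ x) (hxy : x ≤ y) (h : |q x y| = 1) :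
    ∃ t, x = fib t ∧ y = fib (t + 2) := by
  rcases hx.eq_or_lt with rfl | hx
  · exact ⟨0, by simp, by simp [eq_one_of_abs_q_zero_eq_one hxy h]⟩
  rcases hxy.eq_or_lt with rfl | hxy
  · obtain rfl := eq_one_of_abs_q_self_eq_one hx.le h
    exact ⟨-1, by simp, by norm_num⟩
  have hy_le := le_three_mul_of_abs_q_eq_one hx (hx.trans hxy) h
  have hy_ge := two_mul_le_of_abs_q_eq_one hx hxy h
  obtain ⟨t, hzt, hxt⟩ := exists_fib_of_abs_q_eq_one (x := 3 * x - y) (y := x)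
    (by linarith) (by linarith) (by rwa [q_three_mul_sub])
  refine ⟨t + 2, hxt, ?_⟩
  rw [add_assoc, show (2 : ℤ) + 2 = 4 by norm_num, fib_add_four, ← hxt, ← hzt]
  ring
termination_by y.toNat
decreasing_by omega

theorem exists_fib_pair_of_abs_q_eq_one {x y : ℤ} (hx : 0 ≤ x) (hy : 0 ≤ y)
    (h : |q x y| = 1) :
    ∃ t, (x = fib t ∧ y = fib (t + 2)) ∨ (x = fib (t + 2) ∧ y = fib t) := by
  rcases le_total x y with hxy | hyx
  · obtain ⟨t, ht⟩ := exists_fib_of_abs_q_eq_one hx hxy h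
    exact ⟨t, Or.inl ht⟩
  · obtain ⟨t, hyt, hxt⟩ := exists_fib_of_abs_q_eq_one hy hyx (by rwa [q_comm])
    exact ⟨t, Or.inr ⟨hxt, hyt⟩⟩

/-- For integers `x` and `y`, `|q(x,y)| = 1` if and only if there exist an integer `t` and a
sign `ε ∈ {1,-1}` such that `(x,y) = (ε·f t, ε·f (t+2))` or `(x,y) = (ε·f (t+2), ε·f t)`,
where `f` is the extended Fibonacci sequence. -/
theorem abs_q_eq_one_iff_fib_pair (f : ℤ → ℤ) (h0 : f 0 = 0) (h1 : f 1 = 1)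
    (hrec : ∀ n : ℤ, f (n + 1) = f n + f (n - 1)) (x y : ℤ) :
    |q x y| = 1 ↔
      ∃ (t : ℤ) (ε : ℤ), (ε = 1 ∨ ε = -1) ∧
        ((x = ε * f t ∧ y = ε * f (t + 2)) ∨ (x = ε * f (t + 2) ∧ y = ε * f t)) := by
  obtain rfl := eq_fib_of_rec h0 h1 hrec
  constructor
  · intro h
    rcases Int.mul_nonneg_iff.mp (mul_nonneg_of_abs_q_eq_one h) with ⟨hx, hy⟩ | ⟨hx, hy⟩
    · obtain ⟨t, ht⟩ := exists_fib_pair_of_abs_q_eq_one hx hy h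
      exact ⟨t, 1, Or.inl rfl, by simpa using ht⟩
    · obtain ⟨t, ht⟩ := exists_fib_pair_of_abs_q_eq_one (neg_nonneg.2 hx) (neg_nonneg.2 hy)
        (by rwa [q_neg_neg])
      exact ⟨t, -1, Or.inr rfl, by simpa [neg_eq_iff_eq_neg] using ht⟩
  · rintro ⟨t, ε, hε, ⟨rfl, rfl⟩ | ⟨rfl, rfl⟩⟩ <;>
    · have hε2 : ε ^ 2 = 1 := by rcases hε with rfl | rfl <;> norm_num
      simp [q_mul_mul, hε2, q_comm (fib (t + 2)), q_fib]
end

section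
/- Let x and y be adjacent vertices of G and let s ≥ 1. Then the set T'_s(x,y) = { z ∈ V : d(x,z) = s and d(y,z) = s-1 } (the vertices at distance s from x whose connecting path to x passes through y) is finite of cardinality 2^(s-1). -/
/-!
Root the tree at `x`. A vertex `z ≠ x` has a unique neighbour closer to `x` (two would close a
cycle), so `T'_{s+1}(x, y)` is the disjoint union of the sets of children of the vertices of
`T'_s(x, y)`. In a `(k + 1)`-regular tree every vertex other than `x` has exactly `k` children,
so the count is multiplied by `k` at each step, starting from `T'_1(x, y) = {y}`.
-/

open Function Set

theorem Set.Finite.encard_biUnion_of_encard_eq {ι α : Type*} {t : Set ι} (ht : t.Finite)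
    {s : ι → Set α} {n : ℕ∞} (hs : ∀ i ∈ t, (s i).encard = n) (h : t.PairwiseDisjoint s) :
    (⋃ i ∈ t, s i).encard = t.encard * n := by
  rw [ht.encard_biUnion h, finsum_mem_congr rfl hs, finsum_mem_eq_finite_toFinset_sum _ ht,
    Finset.sum_const, nsmul_eq_mul, ht.encard_eq_coe_toFinset_card]

namespace SimpleGraph

variable {V : Type*} {G : SimpleGraph V} {x y w z : V}

def childSet (G : SimpleGraph V) (x w : V) : Set V :=
  {z | G.Adj w z ∧ G.dist x z = G.dist x w + 1}

/-- The set `T'_s(x, y)` of the statement. -/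
def branchSphere (G : SimpleGraph V) (x y : V) (s : ℕ) : Set V :=
  {z | G.dist x z = s ∧ G.dist y z = s - 1}

theorem exists_adj_dist_add_one_eq (h : G.dist x z ≠ 0) :
    ∃ w, G.Adj w z ∧ G.dist x w + 1 = G.dist x z := by
  obtain ⟨p, hp⟩ := exists_walk_of_dist_ne_zero (dist_comm (G := G) ▸ h)
  cases p with
  | nil => simp_all
  | @cons _ w _ hzw q =>
    have hq : G.dist x w ≤ q.length := dist_comm (G := G) ▸ dist_le q
    rw [Walk.length_cons, dist_comm] at hp
    refine ⟨w, hzw.symm, ?_⟩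
    have := hzw.diff_dist_adj (u := x)
    omega

theorem IsAcyclic.eq_of_adj_of_dist_add_one_eq (hG : G.IsAcyclic) {w₁ w₂ : V}
    (h₁ : G.Adj w₁ z) (h₂ : G.Adj w₂ z)
    (d₁ : G.dist x w₁ + 1 = G.dist x z) (d₂ : G.dist x w₂ + 1 = G.dist x z) : w₁ = w₂ := by
  have hxz : G.Reachable x z := Reachable.of_dist_ne_zero (by omega)
  obtain ⟨p₁, -, l₁⟩ := (hxz.trans h₁.symm.reachable).exists_path_of_dist
  obtain ⟨p₂, -, l₂⟩ := (hxz.trans h₂.symm.reachable).exists_path_of_dist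
  have hq₁ := (p₁.concat h₁).isPath_of_length_eq_dist (by rw [Walk.length_concat, l₁, d₁])
  have hq₂ := (p₂.concat h₂).isPath_of_length_eq_dist (by rw [Walk.length_concat, l₂, d₂])
  have hpath := (hG.subsingleton_path x z).elim ⟨_, hq₁⟩ ⟨_, hq₂⟩
  exact (Walk.concat_inj (congrArg Subtype.val hpath)).1

theorem IsAcyclic.pairwise_disjoint_childSet (hG : G.IsAcyclic) (x : V) :
    Pairwise (Disjoint on G.childSet x) := by
  intro w₁ w₂ hne
  refine Set.disjoint_left.mpr fun z ⟨h₁, d₁⟩ ⟨h₂, d₂⟩ ↦ hne ?_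
  exact hG.eq_of_adj_of_dist_add_one_eq h₁ h₂ d₁.symm d₂.symm

theorem IsAcyclic.childSet_eq_neighborSet_sdiff (hG : G.IsAcyclic) {p : V} (hpw : G.Adj p w)
    (hp : G.dist x p + 1 = G.dist x w) : G.childSet x w = G.neighborSet w \ {p} := by
  have hxw : G.Reachable x w := Reachable.of_dist_ne_zero (by omega)
  ext z
  simp only [childSet, mem_ofPred_eq, mem_sdiff, mem_neighborSet, mem_singleton_iff]
  constructor
  · rintro ⟨hwz, hz⟩
    exact ⟨hwz, by rintro rfl; omega⟩
  · rintro ⟨hwz, hzp⟩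
    refine ⟨hwz, ?_⟩
    rcases hG.dist_eq_dist_add_one_of_adj_of_reachable x hwz hxw with h | h
    · exact absurd (hG.eq_of_adj_of_dist_add_one_eq hwz.symm hpw h.symm hp) hzp
    · exact h

theorem IsAcyclic.encard_childSet (hG : G.IsAcyclic) (h : G.dist x w ≠ 0) :
    (G.childSet x w).encard = (G.neighborSet w).encard - 1 := by
  obtain ⟨p, hpw, hp⟩ := exists_adj_dist_add_one_eq h
  rw [hG.childSet_eq_neighborSet_sdiff hpw hp,
    encard_sdiff_singleton_of_mem (s := G.neighborSet w) hpw.symm]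

theorem branchSphere_one (hxy : G.Adj x y) : G.branchSphere x y 1 = {y} := by
  ext z
  simp only [branchSphere, mem_ofPred_eq, mem_singleton_iff, dist_eq_one_iff_adj]
  constructor
  · rintro ⟨hxz, hyz⟩
    exact ((hxy.symm.reachable.trans hxz.reachable).dist_eq_zero_iff.mp hyz).symm
  · rintro rfl
    exact ⟨hxy, dist_self⟩

theorem Connected.branchSphere_succ (hconn : G.Connected) (hxy : G.Adj x y) {s : ℕ}
    (hs : 1 ≤ s) :
    G.branchSphere x y (s + 1) = ⋃ w ∈ G.branchSphere x y s, G.childSet x w := by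
  have hdxy : G.dist x y = 1 := dist_eq_one_iff_adj.mpr hxy
  ext z
  simp only [branchSphere, childSet, mem_ofPred_eq, mem_iUnion, exists_prop,
    Nat.add_sub_cancel]
  constructor
  · rintro ⟨hxz, hyz⟩
    obtain ⟨w, hwz, hyw⟩ := exists_adj_dist_add_one_eq (G := G) (x := y) (z := z) (by omega)
    have := dist_eq_one_iff_adj.mpr hwz
    have : G.dist x w ≤ G.dist x y + G.dist y w := hconn.dist_triangle
    have : G.dist x z ≤ G.dist x w + G.dist w z := hconn.dist_triangle
    exact ⟨w, ⟨by omega, by omega⟩, hwz, by omega⟩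
  · rintro ⟨w, ⟨hxw, hyw⟩, hwz, hxz⟩
    have := dist_eq_one_iff_adj.mpr hwz
    have : G.dist y z ≤ G.dist y w + G.dist w z := hconn.dist_triangle
    have : G.dist x z ≤ G.dist x y + G.dist y z := hconn.dist_triangle
    omega

theorem IsTree.encard_branchSphere (hG : G.IsTree) {k : ℕ}
    (hreg : ∀ v, (G.neighborSet v).ncard = k + 1) (hxy : G.Adj x y) {s : ℕ} (hs : 1 ≤ s) :
    (G.branchSphere x y s).encard = (k ^ (s - 1) : ℕ) := by
  induction s, hs using Nat.le_induction with
  | base => simp [branchSphere_one hxy]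
  | succ s hs ih =>
    have hchild : ∀ w ∈ G.branchSphere x y s, (G.childSet x w).encard = k := by
      intro w hw
      rw [hG.isAcyclic.encard_childSet (by rw [hw.1]; omega),
        ← (finite_of_ncard_ne_zero (by simp [hreg w])).cast_ncard_eq, hreg w]
      norm_cast
    rw [hG.connected.branchSphere_succ hxy hs,
      (finite_of_encard_eq_coe ih).encard_biUnion_of_encard_eq hchild
        ((hG.isAcyclic.pairwise_disjoint_childSet x).set_pairwise _), ih, ← Nat.cast_mul,
      ← pow_succ, Nat.sub_add_cancel hs, Nat.add_sub_cancel]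

end SimpleGraph

/-- In a 3-regular tree `G`, for adjacent vertices `x`, `y` and `s ≥ 1`, the set
`T'_s(x,y)` of vertices `z` with `d(x,z) = s` and `d(y,z) = s-1` (the vertices at distance
`s` from `x` whose connecting path to `x` passes through `y`) is finite of
cardinality `2^(s-1)`. -/
theorem card_T' (V : Type*) (G : SimpleGraph V) (hconn : G.Connected)
    (hacyc : G.IsAcyclic) (hreg : ∀ v : V, (G.neighborSet v).ncard = 3)
    (x y : V) (hxy : G.Adj x y) (s : ℕ) (hs : 1 ≤ s) :
    {z : V | G.dist x z = s ∧ G.dist y z = s - 1}.Finite ∧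
    {z : V | G.dist x z = s ∧ G.dist y z = s - 1}.ncard = 2 ^ (s - 1) := by
  have h := (⟨hconn, hacyc⟩ : G.IsTree).encard_branchSphere (k := 2) hreg hxy hs
  have hfin := finite_of_encard_eq_coe h
  exact ⟨hfin, by exact_mod_cast hfin.cast_ncard_eq.trans h⟩
end

section
/- For every vertex x of G, every natural number t and every vertex z, the coordinate s_t(x)(z) is non-negative. -/
open scoped Classical

/-- `Φ⁻ₓ`: apply the reflection at every vertex at odd distance from `x`. -/
noncomputable def phiOdd {V : Type*} (G : SimpleGraph V) (x : V) (a : V → ℤ) : V → ℤ :=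
  fun z => if Odd (G.dist x z) then -a z + ∑ᶠ w ∈ G.neighborSet z, a w else a z

/-- `Φ⁺ₓ`: apply the reflection at every vertex at even distance from `x`. -/
noncomputable def phiEven {V : Type*} (G : SimpleGraph V) (x : V) (a : V → ℤ) : V → ℤ :=
  fun z => if Even (G.dist x z) then -a z + ∑ᶠ w ∈ G.neighborSet z, a w else a z

/-- The Fibonacci vectors `s_t(x)`: `s_0(x) = δ_x`, `s_{t+1}(x) = Φ⁻ₓ s_t(x)` for even `t`
and `s_{t+1}(x) = Φ⁺ₓ s_t(x)` for odd `t`. -/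
noncomputable def sVec {V : Type*} (G : SimpleGraph V) (x : V) : ℕ → V → ℤ
  | 0 => fun z => if z = x then 1 else 0
  | t + 1 => if Even t then phiOdd G x (sVec G x t) else phiEven G x (sVec G x t)

/-- The Fibonacci vectors `r_t(x,y)`: `r_0(x,y) = δ_x + δ_y`, `r_{t+1}(x,y) = Φ⁻ₓ r_t(x,y)`
for even `t` and `r_{t+1}(x,y) = Φ⁺ₓ r_t(x,y)` for odd `t`. -/
noncomputable def rVec {V : Type*} (G : SimpleGraph V) (x y : V) : ℕ → V → ℤ
  | 0 => fun z => (if z = x then 1 else 0) + (if z = y then 1 else 0)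
  | t + 1 => if Even t then phiOdd G x (rVec G x y t) else phiEven G x (rVec G x y t)

/-- In a connected acyclic graph, every path realizes the graph distance. -/
lemma aux_length_eq_dist {V : Type*} {G : SimpleGraph V} (hconn : G.Connected)
    (hacyc : G.IsAcyclic) {u v : V} {p : G.Walk u v} (hp : p.IsPath) :
    p.length = G.dist u v := by
  obtain ⟨q, hq⟩ := hconn.exists_walk_length_eq_dist u v
  have hb : q.bypass.IsPath := q.bypass_isPath
  have h1 : q.bypass.length ≤ G.dist u v := hq ▸ q.length_bypass_le
  have h2 : G.dist u v ≤ q.bypass.length := SimpleGraph.dist_le _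
  have hpq : p = q.bypass := by
    have := hacyc.path_unique ⟨p, hp⟩ ⟨q.bypass, hb⟩
    exact congrArg Subtype.val this
  rw [hpq]; omega

/-- In a connected acyclic graph, distances from a fixed vertex to adjacent vertices
differ by exactly one. -/
lemma aux_adj_dist {V : Type*} {G : SimpleGraph V} (hconn : G.Connected)
    (hacyc : G.IsAcyclic) (x : V) {z w : V} (h : G.Adj z w) :
    G.dist x w = G.dist x z + 1 ∨ G.dist x z = G.dist x w + 1 := by
  obtain ⟨q, hq⟩ := hconn.exists_walk_length_eq_dist x z
  have hb : q.bypass.IsPath := q.bypass_isPath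
  have e3 : q.bypass.length = G.dist x z := aux_length_eq_dist hconn hacyc hb
  by_cases hw : w ∈ q.bypass.support
  · right
    have ht : (q.bypass.takeUntil w hw).IsPath := hb.takeUntil hw
    have hd : (q.bypass.dropUntil w hw).IsPath := hb.dropUntil hw
    have hlen : (q.bypass.takeUntil w hw).length + (q.bypass.dropUntil w hw).length
        = q.bypass.length := by
      have h := congrArg SimpleGraph.Walk.length (q.bypass.take_spec hw)
      rw [SimpleGraph.Walk.length_append] at h
      exact h
    have e1 : (q.bypass.takeUntil w hw).length = G.dist x w :=
      aux_length_eq_dist hconn hacyc ht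
    have e2 : (q.bypass.dropUntil w hw).length = G.dist w z :=
      aux_length_eq_dist hconn hacyc hd
    have e4 : G.dist w z = 1 := SimpleGraph.dist_eq_one_iff_adj.mpr h.symm
    omega
  · left
    have hp : (SimpleGraph.Walk.cons h.symm q.bypass.reverse).IsPath := by
      rw [SimpleGraph.Walk.cons_isPath_iff]
      exact ⟨hb.reverse, by simpa [SimpleGraph.Walk.support_reverse] using hw⟩
    have e5 := aux_length_eq_dist hconn hacyc hp
    simp only [SimpleGraph.Walk.length_cons, SimpleGraph.Walk.length_reverse] at e5
    rw [SimpleGraph.dist_comm] at e5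
    omega

/-- One-step unfolding of `sVec` in terms of residues mod 2. -/
lemma aux_sVec_succ {V : Type*} (G : SimpleGraph V) (x : V) (t : ℕ) (z : V) :
    sVec G x (t + 1) z = if G.dist x z % 2 = t % 2 then sVec G x t z
      else -sVec G x t z + ∑ᶠ w ∈ G.neighborSet z, sVec G x t w := by
  rcases Nat.even_or_odd t with he | ho
  · have ht : t % 2 = 0 := Nat.even_iff.mp he
    have : sVec G x (t + 1) = phiOdd G x (sVec G x t) := by
      simp [sVec, he]
    rw [this]
    unfold phiOdd
    by_cases hd : Odd (G.dist x z)
    · have := Nat.odd_iff.mp hd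
      rw [if_pos hd, if_neg (by omega)]
    · have := Nat.even_iff.mp (Nat.not_odd_iff_even.mp hd)
      rw [if_neg hd, if_pos (by omega)]
  · have ht : t % 2 = 1 := Nat.odd_iff.mp ho
    have : sVec G x (t + 1) = phiEven G x (sVec G x t) := by
      simp [sVec, Nat.not_even_iff_odd.mpr ho]
    rw [this]
    unfold phiEven
    by_cases hd : Even (G.dist x z)
    · have := Nat.even_iff.mp hd
      rw [if_pos hd, if_neg (by omega)]
    · have := Nat.odd_iff.mp (Nat.not_even_iff_odd.mp hd)
      rw [if_neg hd, if_pos (by omega)]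

/-- The coordinates of the Fibonacci vector `s_t(x)` are non-negative. -/
theorem sVec_nonneg (V : Type*) (G : SimpleGraph V) (hconn : G.Connected)
    (hacyc : G.IsAcyclic) (hreg : ∀ v : V, (G.neighborSet v).ncard = 3)
    (x : V) (t : ℕ) (z : V) :
    0 ≤ sVec G x t z := by
  -- finiteness of neighborhoods
  have hfin : ∀ v : V, (G.neighborSet v).Finite := fun v =>
    Set.finite_of_ncard_ne_zero (by rw [hreg v]; norm_num)
  have hcard : ∀ v : V, ((hfin v).toFinset).card = 3 := by
    intro v
    rw [← Set.ncard_eq_toFinset_card _ (hfin v), hreg v]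
  have hsum : ∀ (v : V) (f : V → ℤ),
      ∑ᶠ w ∈ G.neighborSet v, f w = ∑ w ∈ (hfin v).toFinset, f w := by
    intro v f
    rw [← finsum_mem_coe_finset, Set.Finite.coe_toFinset]
  -- parity flips across edges
  have hpar : ∀ {v w : V}, G.Adj v w → G.dist x v % 2 ≠ G.dist x w % 2 := by
    intro v w h
    rcases aux_adj_dist hconn hacyc x h with h1 | h1 <;> omega
  -- main invariant, by induction on `t`
  have key : ∀ t : ℕ, (∀ z : V, 0 ≤ sVec G x t z) ∧
      (∀ v w : V, G.Adj v w → G.dist x v % 2 = t % 2 →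
        sVec G x t w ≤ sVec G x t v) := by
    intro t
    induction t with
    | zero =>
      constructor
      · intro z
        simp only [sVec]
        split <;> norm_num
      · intro v w hvw hpv
        simp only [sVec]
        by_cases hv : v = x
        · subst hv
          split <;> norm_num
        · have hvx : G.dist x v ≠ 1 := by omega
          rw [if_neg hv]
          by_cases hw : w = x
          · exact absurd (SimpleGraph.dist_eq_one_iff_adj.mpr (hw ▸ hvw).symm) hvx
          · rw [if_neg hw]
      | succ t ih =>
        obtain ⟨ih1, ih2⟩ := ih
        -- value at an updated vertex
        have hnb : ∀ v w : V, G.Adj v w → sVec G x t w ≤ sVec G x t v →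
          True := fun _ _ _ _ => trivial
        -- neighbors of an updated vertex dominate it
        have hdom : ∀ z : V, G.dist x z % 2 ≠ t % 2 → ∀ w ∈ (hfin z).toFinset,
            sVec G x t z ≤ sVec G x t w := by
          intro z hz w hw
          rw [Set.Finite.mem_toFinset] at hw
          have hadj : G.Adj w z := (SimpleGraph.mem_neighborSet _ _ _ |>.mp hw).symm
          have := hpar hadj
          exact ih2 w z hadj (by omega)
        constructor
        · intro z
          rw [aux_sVec_succ]
          split
          · exact ih1 z
          · rename_i hz
            rw [hsum]
            obtain ⟨w₀, hw₀⟩ : ∃ w, w ∈ (hfin z).toFinset := by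
              have := hcard z
              exact Finset.card_pos.mp (by omega)
            have h1 : sVec G x t w₀ ≤ ∑ w ∈ (hfin z).toFinset, sVec G x t w :=
              Finset.single_le_sum (fun i _ => ih1 i) hw₀
            have h2 := hdom z hz w₀ hw₀
            linarith
        · intro v w hvw hpv
          have hv : G.dist x v % 2 ≠ t % 2 := by omega
          have hwnot : G.dist x w % 2 = t % 2 := by
            have := hpar hvw
            omega
          rw [aux_sVec_succ, aux_sVec_succ, if_pos hwnot, if_neg hv, hsum]
          -- w is a neighbor of v
          have hwmem : w ∈ (hfin v).toFinset := by
            rw [Set.Finite.mem_toFinset]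
            exact hvw
          obtain ⟨w₁, hw₁, hw₁w⟩ : ∃ w₁, w₁ ∈ (hfin v).toFinset ∧ w₁ ≠ w := by
            apply Finset.exists_mem_ne
            rw [hcard v]; norm_num
          have hsub : ({w, w₁} : Finset V) ⊆ (hfin v).toFinset := by
            intro a ha
            rcases Finset.mem_insert.mp ha with h | h
            · subst h; exact hwmem
            · rw [Finset.mem_singleton] at h; subst h; exact hw₁
          have h1 : ∑ a ∈ ({w, w₁} : Finset V), sVec G x t a ≤
              ∑ a ∈ (hfin v).toFinset, sVec G x t a :=
            Finset.sum_le_sum_of_subset_of_nonneg hsub (fun i _ _ => ih1 i)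
          rw [Finset.sum_pair (Ne.symm hw₁w)] at h1
          have h2 := hdom v hv w₁ hw₁
          linarith
  exact (key t).1 z
end

section
/- For every vertex x of G and every natural number t, the sum of the coordinates s_t(x)(z) over all vertices z with d(x,z) ≢ t (mod 2) equals the Fibonacci number f(2t). -/
open scoped Classical

/-! Let `S_t` be the set of vertices whose distance from `x` differs in parity from `t`, so that
`s_{t+1}(x)` is obtained from `s_t(x)` by reflecting exactly at the vertices of `S_t`, and let
`B_t` and `A_t` be the sums of `s_t(x)` over `S_t` and over its complement. The reflection fixes
the complement, so `B_{t+1} = A_t`. A tree is bipartite with respect to the distance parity, so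
summing `-a(z) + Σ_{w ~ z} a(w)` over `S_t` counts every vertex of the complement once for each of
its three neighbours: `A_{t+1} = 3 A_t - B_t`. This is the recurrence `f(n+2) = 3 f(n) - f(n-2)`
of the even-indexed Fibonacci numbers, and `B_0 = 0 = f(0)`, `A_0 = 1 = f(2)`. -/

open Function Finset SimpleGraph

section

variable {V : Type*} {G : SimpleGraph V}

theorem finsum_mem_finsum_mem_neighborSet {M : Type*} [AddCommMonoid M]
    (hfin : ∀ v, (G.neighborSet v).Finite) {a : V → M} (ha : (support a).Finite) (S : Set V) :
    ∑ᶠ z ∈ S, ∑ᶠ w ∈ G.neighborSet z, a w = ∑ᶠ w, (S ∩ G.neighborSet w).ncard • a w := by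
  set F := ha.toFinset
  set E := F.biUnion fun w => (hfin w).toFinset
  have hinner (z : V) : ∑ᶠ w ∈ G.neighborSet z, a w = ∑ w ∈ F with G.Adj z w, a w :=
    finsum_mem_eq_sum_of_inter_support_eq _ (by ext w; simp [F, and_comm])
  have hcount (w : V) (hw : w ∈ F) :
      (S ∩ G.neighborSet w).ncard = #{z ∈ E | z ∈ S ∧ G.Adj z w} := by
    rw [← Set.ncard_coe_finset]
    congr 1
    ext z
    simp only [Set.mem_inter_iff, mem_neighborSet, coe_filter, E, mem_biUnion,
      Set.Finite.mem_toFinset, Set.mem_ofPred_eq]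
    exact ⟨fun ⟨hz, h⟩ => ⟨⟨w, hw, h⟩, hz, h.symm⟩, fun ⟨_, hz, h⟩ => ⟨hz, h.symm⟩⟩
  calc ∑ᶠ z ∈ S, ∑ᶠ w ∈ G.neighborSet z, a w
      = ∑ z ∈ E with z ∈ S, ∑ w ∈ F with G.Adj z w, a w := by
        simp_rw [hinner]
        refine finsum_mem_eq_sum_of_subset _ (fun z ⟨hzS, hz⟩ => ?_)
          fun z hz => (mem_filter.1 hz).2
        obtain ⟨w, hw, -⟩ := exists_ne_zero_of_sum_ne_zero hz
        rw [mem_filter] at hw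
        exact mem_filter.2 ⟨mem_biUnion.2 ⟨w, hw.1, by simpa using hw.2.symm⟩, hzS⟩
    _ = ∑ w ∈ F, ∑ z ∈ E with z ∈ S ∧ G.Adj z w, a w := by
        refine sum_comm' fun z w => ?_
        simp only [mem_filter]
        tauto
    _ = ∑ w ∈ F, (S ∩ G.neighborSet w).ncard • a w :=
        sum_congr rfl fun w hw => by rw [sum_const, hcount w hw]
    _ = ∑ᶠ w, (S ∩ G.neighborSet w).ncard • a w :=
        (finsum_eq_sum_of_support_subset _ fun w hw => by
          simpa [F] using fun h => hw (by simp [h])).symm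

theorem finsum_mem_finsum_mem_neighborSet_of_isBipartiteWith {M : Type*} [AddCommMonoid M]
    (hfin : ∀ v, (G.neighborSet v).Finite) {a : V → M} (ha : (support a).Finite) {S : Set V}
    (hS : G.IsBipartiteWith S Sᶜ) {d : ℕ} (hreg : ∀ v, (G.neighborSet v).ncard = d) :
    ∑ᶠ z ∈ S, ∑ᶠ w ∈ G.neighborSet z, a w = d • ∑ᶠ w ∈ Sᶜ, a w := by
  have ha' : (support (Sᶜ.indicator a)).Finite := by
    rw [Set.support_indicator]
    exact ha.inter_of_right _
  rw [finsum_mem_finsum_mem_neighborSet hfin ha, finsum_mem_def, smul_finsum' _ ha']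
  refine finsum_congr fun w => ?_
  by_cases hw : w ∈ S
  · have : S ∩ G.neighborSet w = ∅ := by
      rw [Set.inter_comm, ← Set.disjoint_iff_inter_eq_empty]
      exact isBipartiteWith_neighborSet_disjoint hS hw
    simp [this, hw]
  · have : S ∩ G.neighborSet w = G.neighborSet w :=
      Set.inter_eq_right.2 (isBipartiteWith_neighborSet_subset' hS hw)
    simp [this, hw, hreg]

noncomputable def reflectOn {M : Type*} [AddCommGroup M] (G : SimpleGraph V) (S : Set V)
    (a : V → M) : V → M :=
  fun z => if z ∈ S then -a z + ∑ᶠ w ∈ G.neighborSet z, a w else a z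

section Reflection

variable {M : Type*} [AddCommGroup M] {S : Set V} {a : V → M}

theorem reflectOn_of_notMem {z : V} (hz : z ∉ S) : reflectOn G S a z = a z := if_neg hz

theorem support_reflectOn_subset :
    support (reflectOn G S a) ⊆ support a ∪ ⋃ w ∈ support a, G.neighborSet w := by
  intro z hz
  by_contra h
  simp only [Set.mem_union, Set.mem_iUnion, mem_neighborSet, not_or, not_exists] at h
  have hz₀ : a z = 0 := notMem_support.1 h.1
  have hN : ∑ᶠ w ∈ G.neighborSet z, a w = 0 := finsum_mem_of_eqOn_zero fun w hw =>
    notMem_support.1 fun hw' => h.2 w hw' (G.adj_symm hw)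
  exact hz (by simp only [reflectOn, hz₀, hN, neg_zero, add_zero, ite_self])

theorem finite_support_reflectOn (hfin : ∀ v, (G.neighborSet v).Finite) (ha : (support a).Finite) :
    (support (reflectOn G S a)).Finite :=
  (ha.union (ha.biUnion fun w _ => hfin w)).subset support_reflectOn_subset

theorem finsum_mem_compl_reflectOn : ∑ᶠ z ∈ Sᶜ, reflectOn G S a z = ∑ᶠ z ∈ Sᶜ, a z :=
  finsum_mem_congr rfl fun _ hz => reflectOn_of_notMem hz

theorem finsum_mem_reflectOn_add (hfin : ∀ v, (G.neighborSet v).Finite) (ha : (support a).Finite)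
    (hS : G.IsBipartiteWith S Sᶜ) {d : ℕ} (hreg : ∀ v, (G.neighborSet v).ncard = d) :
    ∑ᶠ z ∈ S, reflectOn G S a z + ∑ᶠ z ∈ S, a z = d • ∑ᶠ z ∈ Sᶜ, a z := by
  rw [← finsum_mem_add_distrib' ((finite_support_reflectOn hfin ha).inter_of_right S)
    (ha.inter_of_right S), ← finsum_mem_finsum_mem_neighborSet_of_isBipartiteWith hfin ha hS hreg]
  exact finsum_mem_congr rfl fun z hz => by simp [reflectOn, hz]

end Reflection

theorem isBipartiteWith_dist_mod_two_ne (hG : G.IsTree) (x : V) (t : ℕ) :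
    G.IsBipartiteWith {z | ¬ G.dist x z % 2 = t % 2} {z | ¬ G.dist x z % 2 = t % 2}ᶜ where
  disjoint := disjoint_compl_right
  mem_of_adj v w h := by
    have := hG.dist_eq_dist_add_one_of_adj x h
    simp only [Set.mem_compl_iff, Set.mem_ofPred_eq, not_not]
    omega

theorem add_two_eq_three_mul_sub_of_recurrence {f : ℤ → ℤ}
    (hrec : ∀ n : ℤ, f (n + 1) = f n + f (n - 1)) (n : ℤ) : f (n + 2) = 3 * f n - f (n - 2) := by
  have h₁ := hrec (n + 1)
  have h₂ := hrec n
  have h₃ := hrec (n - 1)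
  ring_nf at *
  linarith

theorem sVec_succ (x : V) (t : ℕ) :
    sVec G x (t + 1) = reflectOn G {z | ¬ G.dist x z % 2 = t % 2} (sVec G x t) := by
  funext z
  rw [sVec]
  rcases Nat.even_or_odd t with ht | ht
  · have hpar : Odd (G.dist x z) ↔ ¬ G.dist x z % 2 = t % 2 := by
      rw [Nat.even_iff] at ht
      rw [Nat.odd_iff]
      omega
    rw [if_pos ht]
    simp only [phiOdd, reflectOn, Set.mem_ofPred_eq, hpar]
    congr
  · have hpar : Even (G.dist x z) ↔ ¬ G.dist x z % 2 = t % 2 := by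
      rw [Nat.odd_iff] at ht
      rw [Nat.even_iff]
      omega
    rw [if_neg (Nat.not_even_iff_odd.2 ht)]
    simp only [phiEven, reflectOn, Set.mem_ofPred_eq, hpar]
    congr

theorem finite_support_sVec (hfin : ∀ v, (G.neighborSet v).Finite) (x : V) (t : ℕ) :
    (support (sVec G x t)).Finite := by
  induction t with
  | zero => exact (Set.finite_singleton x).subset fun z hz => by by_contra h; simp_all [sVec]
  | succ t ih => exact sVec_succ (G := G) x t ▸ finite_support_reflectOn hfin ih

theorem finsum_mem_sVec_zero (x : V) (S : Set V) :
    ∑ᶠ z ∈ S, sVec G x 0 z = if x ∈ S then 1 else 0 := by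
  rw [finsum_mem_def, finsum_eq_single _ x fun z hz => by simp [sVec, hz]]
  simp [sVec, Set.indicator]

theorem finsum_mem_sVec_succ (hG : G.IsTree) (hfin : ∀ v, (G.neighborSet v).Finite) {d : ℕ}
    (hreg : ∀ v, (G.neighborSet v).ncard = d) (x : V) (t : ℕ) :
    ∑ᶠ z ∈ {z | ¬ G.dist x z % 2 = (t + 1) % 2}, sVec G x (t + 1) z =
        ∑ᶠ z ∈ {z | ¬ G.dist x z % 2 = t % 2}ᶜ, sVec G x t z ∧
      ∑ᶠ z ∈ {z | ¬ G.dist x z % 2 = (t + 1) % 2}ᶜ, sVec G x (t + 1) z =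
        d • ∑ᶠ z ∈ {z | ¬ G.dist x z % 2 = t % 2}ᶜ, sVec G x t z -
          ∑ᶠ z ∈ {z | ¬ G.dist x z % 2 = t % 2}, sVec G x t z := by
  have hS : {z | ¬ G.dist x z % 2 = (t + 1) % 2} = {z | ¬ G.dist x z % 2 = t % 2}ᶜ := by
    ext z
    simp only [Set.mem_ofPred_eq, Set.mem_compl_iff]
    omega
  rw [hS, compl_compl, sVec_succ, finsum_mem_compl_reflectOn, eq_sub_iff_add_eq]
  exact ⟨rfl, finsum_mem_reflectOn_add hfin (finite_support_sVec hfin x t)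
    (isBipartiteWith_dist_mod_two_ne hG x t) hreg⟩

end

/-- The sum of the coordinates `s_t(x)(z)` over all vertices `z` with
`d(x,z) ≢ t (mod 2)` equals the Fibonacci number `f (2t)`, where `f` is the extended
Fibonacci sequence. -/
theorem sVec_sum_ne_parity (f : ℤ → ℤ) (h0 : f 0 = 0) (h1 : f 1 = 1)
    (hrec : ∀ n : ℤ, f (n + 1) = f n + f (n - 1))
    (V : Type*) (G : SimpleGraph V) (hconn : G.Connected)
    (hacyc : G.IsAcyclic) (hreg : ∀ v : V, (G.neighborSet v).ncard = 3)
    (x : V) (t : ℕ) :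
    ∑ᶠ z ∈ {z : V | ¬ G.dist x z % 2 = t % 2}, sVec G x t z = f (2 * t) := by
  have hG : G.IsTree := ⟨hconn, hacyc⟩
  have hfin (v : V) : (G.neighborSet v).Finite := Set.finite_of_ncard_ne_zero (by simp [hreg v])
  suffices ∀ t : ℕ, ∑ᶠ z ∈ {z : V | ¬ G.dist x z % 2 = t % 2}, sVec G x t z = f (2 * t) ∧
      ∑ᶠ z ∈ {z : V | ¬ G.dist x z % 2 = t % 2}ᶜ, sVec G x t z = f (2 * t + 2) from (this t).1
  intro t
  induction t with
  | zero =>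
    have h2 : f 2 = 1 := by simpa [h0, h1] using hrec 1
    rw [finsum_mem_sVec_zero, finsum_mem_sVec_zero]
    simp [h0, h2]
  | succ t ih =>
    obtain ⟨hB, hA⟩ := finsum_mem_sVec_succ hG hfin hreg x t
    have hidx : 2 * ((t + 1 : ℕ) : ℤ) = 2 * t + 2 := by push_cast; ring
    rw [hB, hA, ih.1, ih.2, hidx, add_two_eq_three_mul_sub_of_recurrence hrec (2 * t + 2),
      add_sub_cancel_right, nsmul_eq_mul]
    exact ⟨rfl, by norm_num⟩
end

section
/- For all adjacent vertices x and y of G and every natural number t, the sum of the coordinates r_t(x,y)(z) over all vertices z with d(x,z) ≢ t (mod 2) equals the Fibonacci number f(2t-1). -/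
open scoped Classical

section helpers
variable {V : Type*} {G : SimpleGraph V}

lemma nbfin (hreg : ∀ v : V, (G.neighborSet v).ncard = 3) (v : V) :
    (G.neighborSet v).Finite := by
  rcases (G.neighborSet v).finite_or_infinite with h | h
  · exact h
  · exfalso; have := h.ncard; rw [hreg v] at this; omega

lemma path_len (hconn : G.Connected) (hacyc : G.IsAcyclic) {u v : V}
    (p : G.Walk u v) (hp : p.IsPath) : p.length = G.dist u v := by
  obtain ⟨q, hq⟩ := hconn.exists_walk_length_eq_dist u v
  have h1 : (⟨p, hp⟩ : G.Path u v) = ⟨q.bypass, q.bypass_isPath⟩ := hacyc.path_unique _ _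
  have h2 : p = q.bypass := congrArg Subtype.val h1
  have h3 : p.length ≤ G.dist u v := by
    rw [h2]; exact le_of_le_of_eq q.length_bypass_le hq
  exact le_antisymm h3 (SimpleGraph.dist_le p)

lemma adj_dist (hconn : G.Connected) (hacyc : G.IsAcyclic) (x : V) {z w : V}
    (h : G.Adj z w) : G.dist x w = G.dist x z + 1 ∨ G.dist x z = G.dist x w + 1 := by
  obtain ⟨q, hq⟩ := hconn.exists_walk_length_eq_dist x z
  set p := q.bypass with hpdef
  have hp : p.IsPath := q.bypass_isPath
  have hplen : p.length = G.dist x z := path_len hconn hacyc p hp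
  by_cases hw : w ∈ p.support
  · right
    have hdrop : (⟨p.dropUntil w hw, hp.dropUntil hw⟩ : G.Path w z) =
        (SimpleGraph.Path.singleton h.symm) := hacyc.path_unique _ _
    have hdl : (p.dropUntil w hw).length = 1 := by
      have := congrArg (fun r : G.Path w z => r.val.length) hdrop
      simpa [SimpleGraph.Path.singleton] using this
    have htl : (p.takeUntil w hw).length = G.dist x w :=
      path_len hconn hacyc _ (hp.takeUntil hw)
    have hsum := congrArg SimpleGraph.Walk.length (p.take_spec hw)
    rw [SimpleGraph.Walk.length_append] at hsum
    omega
  · left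
    have hrp : (SimpleGraph.Walk.cons h.symm p.reverse).IsPath := by
      rw [SimpleGraph.Walk.cons_isPath_iff]
      refine ⟨hp.reverse, ?_⟩
      rwa [SimpleGraph.Walk.support_reverse, List.mem_reverse]
    have := path_len hconn hacyc _ hrp.reverse
    simp [SimpleGraph.Walk.length_reverse] at this
    omega

lemma adj_parity (hconn : G.Connected) (hacyc : G.IsAcyclic) (x : V) {z w : V}
    (h : G.Adj z w) : G.dist x z % 2 ≠ G.dist x w % 2 := by
  rcases adj_dist hconn hacyc x h with h1 | h1 <;> omega

end helpers

section helpers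
variable {V : Type*} {G : SimpleGraph V}

/-- finsum over a set as a finset sum, given a finset covering the support. -/
lemma fs_eq (g : V → ℤ) (s : Set V) (F : Finset V) (h : ∀ z, g z ≠ 0 → z ∈ F) :
    ∑ᶠ z ∈ s, g z = ∑ z ∈ F, if z ∈ s then g z else 0 := by
  rw [finsum_mem_def, finsum_eq_sum_of_support_subset]
  · exact Finset.sum_congr rfl (fun z _ => by simp [Set.indicator_apply])
  · intro z hz
    simp only [Function.mem_support, Set.indicator_apply] at hz
    by_cases hzs : z ∈ s
    · simp [hzs] at hz; exact h z hz
    · simp [hzs] at hz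

lemma rstep {x y : V} (t : ℕ) (z : V) :
    rVec G x y (t + 1) z =
      if G.dist x z % 2 = (t + 1) % 2 then
        -rVec G x y t z + ∑ᶠ w ∈ G.neighborSet z, rVec G x y t w
      else rVec G x y t z := by
  rcases Nat.even_or_odd t with he | ho
  · have h1 : rVec G x y (t + 1) = phiOdd G x (rVec G x y t) := by
      simp [rVec, he]
    rw [h1, phiOdd]
    have ht := Nat.even_iff.mp he
    exact if_congr (by rw [Nat.odd_iff]; omega) rfl rfl
  · have h1 : rVec G x y (t + 1) = phiEven G x (rVec G x y t) := by
      simp [rVec, Nat.not_even_iff_odd.mpr ho]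
    rw [h1, phiEven]
    have ht := Nat.odd_iff.mp ho
    exact if_congr (by rw [Nat.even_iff]; omega) rfl rfl

lemma step_supp {x y : V} (t : ℕ) (z : V) (hz : rVec G x y (t + 1) z ≠ 0) :
    rVec G x y t z ≠ 0 ∨ ∃ w, rVec G x y t w ≠ 0 ∧ G.Adj w z := by
  rw [rstep] at hz
  by_cases hc : G.dist x z % 2 = (t + 1) % 2
  · rw [if_pos hc] at hz
    by_cases ha : rVec G x y t z ≠ 0
    · exact Or.inl ha
    · push_neg at ha
      right
      have hsum : (∑ᶠ w ∈ G.neighborSet z, rVec G x y t w) ≠ 0 := by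
        intro h0; rw [ha, h0] at hz; simp at hz
      by_contra hno
      push_neg at hno
      apply hsum
      apply finsum_mem_of_eqOn_zero
      intro w hw
      by_contra hne
      exact hno w hne ((SimpleGraph.mem_neighborSet _ _ _).mp hw).symm
  · rw [if_neg hc] at hz; exact Or.inl hz

lemma rsupp (hreg : ∀ v : V, (G.neighborSet v).ncard = 3) (x y : V) (t : ℕ) :
    (Function.support (rVec G x y t)).Finite := by
  induction t with
  | zero =>
      apply Set.Finite.subset ((Set.finite_singleton y).insert x)
      intro z hz
      simp only [Function.mem_support] at hz
      by_contra hmem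
      simp only [Set.mem_insert_iff, Set.mem_singleton_iff, not_or] at hmem
      simp [rVec, hmem.1, hmem.2] at hz
  | succ t ih =>
      have hnb : ∀ v : V, (G.neighborSet v).Finite := fun v => by
        rcases (G.neighborSet v).finite_or_infinite with h | h
        · exact h
        · exfalso; have := h.ncard; rw [hreg v] at this; omega
      apply Set.Finite.subset (ih.union (ih.biUnion (fun v _ => hnb v)))
      intro z hz
      rcases step_supp t z hz with h | ⟨w, hw1, hw2⟩
      · exact Or.inl h
      · exact Or.inr (Set.mem_biUnion hw1 hw2)

end helpers

/-- For adjacent vertices `x`, `y`, the sum of the coordinates `r_t(x,y)(z)` over all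
vertices `z` with `d(x,z) ≢ t (mod 2)` equals the Fibonacci number `f (2t-1)`, where `f`
is the extended Fibonacci sequence. -/
theorem rVec_sum_ne_parity (f : ℤ → ℤ) (h0 : f 0 = 0) (h1 : f 1 = 1)
    (hrec : ∀ n : ℤ, f (n + 1) = f n + f (n - 1))
    (V : Type*) (G : SimpleGraph V) (hconn : G.Connected)
    (hacyc : G.IsAcyclic) (hreg : ∀ v : V, (G.neighborSet v).ncard = 3)
    (x y : V) (hxy : G.Adj x y) (t : ℕ) :
    ∑ᶠ z ∈ {z : V | ¬ G.dist x z % 2 = t % 2}, rVec G x y t z = f (2 * (t : ℤ) - 1) := by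
  classical
  have hnb : ∀ v : V, (G.neighborSet v).Finite := nbfin hreg
  have hxyne : x ≠ y := hxy.ne
  have hdxy : G.dist x y = 1 := SimpleGraph.dist_eq_one_iff_adj.mpr hxy
  have hfm1 : f (-1) = 1 := by
    have := hrec 0
    norm_num [h0, h1] at this
    linarith
  have key : ∀ t : ℕ,
      (∑ᶠ z ∈ {z : V | ¬ G.dist x z % 2 = t % 2}, rVec G x y t z = f (2 * (t : ℤ) - 1)) ∧
      (∑ᶠ z ∈ {z : V | G.dist x z % 2 = t % 2}, rVec G x y t z = f (2 * (t : ℤ) + 1)) := by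
    intro t
    induction t with
    | zero =>
        have hsupp0 : ∀ z : V, rVec G x y 0 z ≠ 0 → z ∈ ({x, y} : Finset V) := by
          intro z hz
          by_contra hm
          simp only [Finset.mem_insert, Finset.mem_singleton, not_or] at hm
          simp [rVec, hm.1, hm.2] at hz
        have hxmem : ¬ (x ∈ {z : V | ¬ G.dist x z % 2 = 0 % 2}) := by
          simp [SimpleGraph.dist_self]
        have hymem : y ∈ {z : V | ¬ G.dist x z % 2 = 0 % 2} := by
          simp [Set.mem_setOf_eq, hdxy]
        have hxmem2 : x ∈ {z : V | G.dist x z % 2 = 0 % 2} := by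
          simp [Set.mem_setOf_eq, SimpleGraph.dist_self]
        have hymem2 : ¬ (y ∈ {z : V | G.dist x z % 2 = 0 % 2}) := by
          simp [Set.mem_setOf_eq, hdxy]
        constructor
        · rw [fs_eq _ _ _ hsupp0, Finset.sum_insert (by simp [hxyne]), Finset.sum_singleton,
            if_neg hxmem, if_pos hymem]
          simp [rVec, hxyne, (Ne.symm hxyne), hfm1]
        · rw [fs_eq _ _ _ hsupp0, Finset.sum_insert (by simp [hxyne]), Finset.sum_singleton,
            if_pos hxmem2, if_neg hymem2]
          simp [rVec, hxyne, (Ne.symm hxyne), h1]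
    | succ t ih =>
        obtain ⟨ihT, ihS⟩ := ih
        set S : Finset V := (rsupp hreg x y t).toFinset with hSdef
        set F : Finset V := S ∪ S.biUnion (fun v => (hnb v).toFinset) with hFdef
        have hSsub : ∀ z, rVec G x y t z ≠ 0 → z ∈ S := fun z hz =>
          (Set.Finite.mem_toFinset _).mpr hz
        have hSF : S ⊆ F := Finset.subset_union_left
        have hFsupp : ∀ z, rVec G x y (t + 1) z ≠ 0 → z ∈ F := by
          intro z hz
          rcases step_supp t z hz with h | ⟨w, hw1, hw2⟩
          · exact hSF (hSsub z h)
          · exact Finset.mem_union_right _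
              (Finset.mem_biUnion.mpr ⟨w, hSsub w hw1, (hnb w).mem_toFinset.mpr hw2⟩)
        -- T part
        have hTset : {z : V | ¬ G.dist x z % 2 = (t + 1) % 2} =
            {z : V | G.dist x z % 2 = t % 2} := by
          ext z; simp only [Set.mem_setOf_eq]; omega
        have hT1 : ∑ᶠ z ∈ {z : V | ¬ G.dist x z % 2 = (t + 1) % 2}, rVec G x y (t + 1) z
            = ∑ᶠ z ∈ {z : V | G.dist x z % 2 = t % 2}, rVec G x y t z := by
          refine finsum_mem_congr hTset ?_
          intro z hz
          simp only [Set.mem_setOf_eq] at hz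
          rw [rstep, if_neg (by omega)]
        -- S part
        have hnbsum : ∀ z : V, (∑ᶠ w ∈ G.neighborSet z, rVec G x y t w)
            = ∑ w ∈ S, if w ∈ G.neighborSet z then rVec G x y t w else 0 :=
          fun z => fs_eq _ _ _ hSsub
        have hS1 : ∑ᶠ z ∈ {z : V | G.dist x z % 2 = (t + 1) % 2}, rVec G x y (t + 1) z
            = ∑ z ∈ F, if G.dist x z % 2 = (t + 1) % 2 then
                (-rVec G x y t z + ∑ w ∈ S, if w ∈ G.neighborSet z then rVec G x y t w else 0)
              else 0 := by
          rw [fs_eq _ _ _ hFsupp]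
          refine Finset.sum_congr rfl (fun z _ => ?_)
          simp only [Set.mem_setOf_eq]
          by_cases hc : G.dist x z % 2 = (t + 1) % 2
          · rw [if_pos hc, if_pos hc, rstep, if_pos hc, hnbsum]
          · rw [if_neg hc, if_neg hc]
        have hsplit : (∑ z ∈ F, if G.dist x z % 2 = (t + 1) % 2 then
                (-rVec G x y t z + ∑ w ∈ S, if w ∈ G.neighborSet z then rVec G x y t w else 0)
              else 0)
            = (∑ z ∈ F, if G.dist x z % 2 = (t + 1) % 2 then -rVec G x y t z else 0)
              + ∑ z ∈ F, if G.dist x z % 2 = (t + 1) % 2 then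
                  (∑ w ∈ S, if w ∈ G.neighborSet z then rVec G x y t w else 0) else 0 := by
          rw [← Finset.sum_add_distrib]
          refine Finset.sum_congr rfl (fun z _ => ?_)
          by_cases hc : G.dist x z % 2 = (t + 1) % 2 <;> simp [hc]
        -- first piece equals -(T t)
        have hTold : ∑ᶠ z ∈ {z : V | ¬ G.dist x z % 2 = t % 2}, rVec G x y t z
            = ∑ z ∈ F, if G.dist x z % 2 = (t + 1) % 2 then rVec G x y t z else 0 := by
          rw [fs_eq _ _ F (fun z hz => hSF (hSsub z hz))]
          refine Finset.sum_congr rfl (fun z _ => ?_)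
          have : (z ∈ {z : V | ¬ G.dist x z % 2 = t % 2}) ↔
              (G.dist x z % 2 = (t + 1) % 2) := by simp only [Set.mem_setOf_eq]; omega
          by_cases hc : G.dist x z % 2 = (t + 1) % 2
          · rw [if_pos (this.mpr hc), if_pos hc]
          · rw [if_neg (fun hh => hc (this.mp hh)), if_neg hc]
        have hfirst : (∑ z ∈ F, if G.dist x z % 2 = (t + 1) % 2 then -rVec G x y t z else 0)
            = -(f (2 * (t : ℤ) - 1)) := by
          rw [← ihT, hTold, ← Finset.sum_neg_distrib]
          refine Finset.sum_congr rfl (fun z _ => ?_)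
          by_cases hc : G.dist x z % 2 = (t + 1) % 2 <;> simp [hc]
        -- second piece equals 3 * (S t)
        have hSold : ∑ᶠ z ∈ {z : V | G.dist x z % 2 = t % 2}, rVec G x y t z
            = ∑ w ∈ S, if G.dist x w % 2 = t % 2 then rVec G x y t w else 0 := by
          rw [fs_eq _ _ S hSsub]
          refine Finset.sum_congr rfl (fun z _ => ?_)
          by_cases hc : G.dist x z % 2 = t % 2
          · rw [if_pos (show z ∈ {z : V | G.dist x z % 2 = t % 2} from hc), if_pos hc]
          · rw [if_neg (show z ∉ {z : V | G.dist x z % 2 = t % 2} from hc), if_neg hc]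
        have hsecond : (∑ z ∈ F, if G.dist x z % 2 = (t + 1) % 2 then
                  (∑ w ∈ S, if w ∈ G.neighborSet z then rVec G x y t w else 0) else 0)
            = 3 * f (2 * (t : ℤ) + 1) := by
          have step1 : ∀ z ∈ F, (if G.dist x z % 2 = (t + 1) % 2 then
                  (∑ w ∈ S, if w ∈ G.neighborSet z then rVec G x y t w else 0) else 0)
              = ∑ w ∈ S, if G.dist x z % 2 = (t + 1) % 2 ∧ G.Adj z w
                  then rVec G x y t w else 0 := by
            intro z _
            by_cases hc : G.dist x z % 2 = (t + 1) % 2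
            · rw [if_pos hc]
              refine Finset.sum_congr rfl (fun w _ => ?_)
              by_cases ha : G.Adj z w
              · rw [if_pos ((SimpleGraph.mem_neighborSet _ _ _).mpr ha), if_pos ⟨hc, ha⟩]
              · rw [if_neg (fun hh => ha ((SimpleGraph.mem_neighborSet _ _ _).mp hh)),
                  if_neg (fun hh => ha hh.2)]
            · rw [if_neg hc]
              symm
              exact Finset.sum_eq_zero (fun w _ => if_neg (fun hh => hc hh.1))
          rw [Finset.sum_congr rfl step1, Finset.sum_comm]
          have inner : ∀ w ∈ S, (∑ z ∈ F, if G.dist x z % 2 = (t + 1) % 2 ∧ G.Adj z w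
                  then rVec G x y t w else 0)
              = if G.dist x w % 2 = t % 2 then 3 * rVec G x y t w else 0 := by
            intro w hwS
            by_cases hq : G.dist x w % 2 = t % 2
            · rw [if_pos hq, ← Finset.sum_filter, Finset.sum_const]
              have hfil : F.filter (fun z => G.dist x z % 2 = (t + 1) % 2 ∧ G.Adj z w)
                  = (hnb w).toFinset := by
                ext z
                simp only [Finset.mem_filter, Set.Finite.mem_toFinset,
                  SimpleGraph.mem_neighborSet]
                constructor
                · rintro ⟨-, -, ha⟩; exact ha.symm
                · intro ha
                  have hpar := adj_parity hconn hacyc x ha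
                  refine ⟨?_, by omega, ha.symm⟩
                  exact Finset.mem_union_right _
                    (Finset.mem_biUnion.mpr ⟨w, hwS, (hnb w).mem_toFinset.mpr ha⟩)
              rw [hfil]
              have hcard : (hnb w).toFinset.card = 3 := by
                rw [← Set.ncard_eq_toFinset_card _ (hnb w)]
                exact hreg w
              rw [hcard]
              simp [smul_eq_mul]
            · rw [if_neg hq]
              refine Finset.sum_eq_zero (fun z _ => if_neg ?_)
              rintro ⟨hz, ha⟩
              have hpar := adj_parity hconn hacyc x ha
              omega
          rw [Finset.sum_congr rfl inner, ← ihS, hSold, Finset.mul_sum]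
          refine Finset.sum_congr rfl (fun w _ => ?_)
          by_cases hq : G.dist x w % 2 = t % 2 <;> simp [hq]
        constructor
        · rw [hT1, ihS]
          push_cast
          ring_nf
        · rw [hS1, hsplit, hfirst, hsecond]
          have e1 := hrec (2 * (t : ℤ) + 2)
          have e2 := hrec (2 * (t : ℤ) + 1)
          have e3 := hrec (2 * (t : ℤ))
          have n1 : (2 * (t : ℤ) + 2) + 1 = 2 * ((t : ℤ) + 1) + 1 := by ring
          have n2 : (2 * (t : ℤ) + 2) - 1 = 2 * (t : ℤ) + 1 := by ring
          have n3 : (2 * (t : ℤ) + 1) + 1 = 2 * (t : ℤ) + 2 := by ring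
          have n4 : (2 * (t : ℤ) + 1) - 1 = 2 * (t : ℤ) := by ring
          have n5 : (2 * (t : ℤ)) + 1 = 2 * (t : ℤ) + 1 := by ring
          have n6 : (2 * (t : ℤ)) - 1 = 2 * (t : ℤ) - 1 := by ring
          rw [n1, n2] at e1
          rw [n3, n4] at e2
          rw [n5, n6] at e3
          push_cast
          linarith
  exact (key t).1
end

section
/- For every vertex x of G, every natural number t, and all vertices z, z' with d(x,z) = d(x,z'), one has s_t(x)(z) = s_t(x)(z'); that is, the coordinate s_t(x)(z) depends only on the distance d(x,z). -/
/-!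
Seen from `x`, a `3`-regular tree is spherically symmetric: `x` has three neighbours, all at
distance `1`, and a vertex at distance `n + 1` has exactly one neighbour at distance `n` (the
penultimate vertex of the unique path from `x`) and two at distance `n + 2`. Hence the neighbour
sum of a function of `d(x, ·)` is again a function of `d(x, ·)`, so `Φ⁺ₓ` and `Φ⁻ₓ` preserve such
radial functions, and `s_t(x)` is radial by induction on `t`, starting from `δ_x`.
-/

open scoped Classical

namespace SimpleGraph

variable {V : Type*} {G : SimpleGraph V} {x z w : V}

lemma Walk.dist_le_of_mem_support {u v : V} (p : G.Walk u v) (hw : w ∈ p.support) :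
    G.dist u w ≤ p.length :=
  (dist_le _).trans (p.length_takeUntil_le_length hw)

lemma IsAcyclic.eq_penultimate_of_adj_of_dist_lt (hG : G.IsAcyclic) {q : G.Walk x z}
    (hq : q.IsPath) (hadj : G.Adj z w) (hlt : G.dist x w < G.dist x z) : w = q.penultimate := by
  obtain ⟨p, hp, hpl⟩ := (q.reachable.trans hadj.reachable).exists_path_of_dist
  have hz : z ∉ p.support := fun hz => by
    have := p.dist_le_of_mem_support hz
    omega
  exact hG.eq_penultimate_of_adj_end hq hadj
    (hG.mem_support_of_ne_mem_support_of_adj_of_isPath hq hp hadj hz)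

lemma IsAcyclic.dist_eq_iff_eq_penultimate (hG : G.IsAcyclic) {n : ℕ} {q : G.Walk x z}
    (hq : q.length = G.dist x z) (hz : G.dist x z = n + 1) (hadj : G.Adj z w) :
    G.dist x w = n ↔ w = q.penultimate := by
  constructor
  · intro hw
    exact hG.eq_penultimate_of_adj_of_dist_lt (q.isPath_of_length_eq_dist hq) hadj (by omega)
  · rintro rfl
    have hle : G.dist x q.penultimate ≤ n := by
      have := dist_le q.dropLast
      rw [Walk.length_dropLast] at this
      omega
    have := hG.dist_eq_dist_add_one_of_adj_of_reachable x hadj q.reachable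
    omega

variable [G.LocallyFinite] {k : ℕ}

lemma IsAcyclic.finsum_neighborSet_comp_dist_of_dist_eq_succ (hG : G.IsAcyclic)
    (hreg : G.IsRegularOfDegree (k + 1)) (f : ℕ → ℤ) {n : ℕ} (hz : G.dist x z = n + 1) :
    ∑ᶠ w ∈ G.neighborSet z, f (G.dist x w) = f n + k * f (n + 2) := by
  obtain ⟨q, -, hq⟩ := (Reachable.of_dist_ne_zero (by omega : G.dist x z ≠ 0)).exists_path_of_dist
  have hnil : ¬q.Nil := by rw [← Walk.length_eq_zero_iff]; omega
  have hsplit : ∀ w ∈ G.neighborFinset z,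
      f (G.dist x w) = f (n + 2) + if w = q.penultimate then f n - f (n + 2) else 0 := by
    intro w hw
    rw [mem_neighborFinset] at hw
    rw [← hG.dist_eq_iff_eq_penultimate hq hz hw]
    rcases hG.dist_eq_dist_add_one_of_adj_of_reachable x hw q.reachable with h | h
    · simp [show G.dist x w = n by omega]
    · simp [show G.dist x w = n + 2 by omega]
  rw [← coe_neighborFinset, finsum_mem_coe_finset, Finset.sum_congr rfl hsplit,
    Finset.sum_add_distrib, Finset.sum_const, card_neighborFinset_eq_degree, hreg,
    Finset.sum_ite_eq', if_pos ((mem_neighborFinset _ _ _).2 (q.adj_penultimate hnil).symm)]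
  ring

lemma finsum_neighborSet_self_comp_dist (hreg : G.IsRegularOfDegree k) (f : ℕ → ℤ) :
    ∑ᶠ w ∈ G.neighborSet x, f (G.dist x w) = k * f 1 := by
  have hone : ∀ w ∈ G.neighborFinset x, f (G.dist x w) = f 1 := fun w hw => by
    rw [dist_eq_one_iff_adj.2 ((mem_neighborFinset _ _ _).1 hw)]
  rw [← coe_neighborFinset, finsum_mem_coe_finset, Finset.sum_congr rfl hone, Finset.sum_const,
    card_neighborFinset_eq_degree, hreg, nsmul_eq_mul]

/-- The value at distance `n` from `x` of the neighbour sum of `f ∘ G.dist x` in a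
`(k + 1)`-regular tree. -/
def radialNeighborSum (k : ℕ) (f : ℕ → ℤ) : ℕ → ℤ
  | 0 => (k + 1) * f 1
  | n + 1 => f n + k * f (n + 2)

lemma IsAcyclic.finsum_neighborSet_comp_dist (hconn : G.Connected) (hG : G.IsAcyclic)
    (hreg : G.IsRegularOfDegree (k + 1)) (f : ℕ → ℤ) (x z : V) :
    ∑ᶠ w ∈ G.neighborSet z, f (G.dist x w) = radialNeighborSum k f (G.dist x z) := by
  rcases hz : G.dist x z with _ | n
  · obtain rfl := hconn.dist_eq_zero_iff.1 hz
    rw [finsum_neighborSet_self_comp_dist hreg, radialNeighborSum, Nat.cast_succ]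
  · exact hG.finsum_neighborSet_comp_dist_of_dist_eq_succ hreg f hz

end SimpleGraph

open SimpleGraph

section Radial

variable {V : Type*} {G : SimpleGraph V} [G.LocallyFinite] {k : ℕ}

lemma phiOdd_comp_dist (hconn : G.Connected) (hG : G.IsAcyclic)
    (hreg : G.IsRegularOfDegree (k + 1)) (x : V) (f : ℕ → ℤ) :
    phiOdd G x (f ∘ G.dist x) =
      (fun n => if Odd n then -f n + radialNeighborSum k f n else f n) ∘ G.dist x := by
  ext z
  simp only [phiOdd, Function.comp_apply, hG.finsum_neighborSet_comp_dist hconn hreg]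

lemma phiEven_comp_dist (hconn : G.Connected) (hG : G.IsAcyclic)
    (hreg : G.IsRegularOfDegree (k + 1)) (x : V) (f : ℕ → ℤ) :
    phiEven G x (f ∘ G.dist x) =
      (fun n => if Even n then -f n + radialNeighborSum k f n else f n) ∘ G.dist x := by
  ext z
  simp only [phiEven, Function.comp_apply, hG.finsum_neighborSet_comp_dist hconn hreg]

lemma exists_sVec_eq_comp_dist (hconn : G.Connected) (hG : G.IsAcyclic)
    (hreg : G.IsRegularOfDegree (k + 1)) (x : V) (t : ℕ) :
    ∃ f : ℕ → ℤ, sVec G x t = f ∘ G.dist x := by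
  induction t with
  | zero =>
    refine ⟨fun n => if n = 0 then 1 else 0, funext fun z => ?_⟩
    simp only [sVec, Function.comp_apply, hconn.dist_eq_zero_iff, eq_comm]
  | succ t ih =>
    obtain ⟨f, hf⟩ := ih
    rw [sVec, hf]
    split_ifs
    · exact ⟨_, phiOdd_comp_dist hconn hG hreg x f⟩
    · exact ⟨_, phiEven_comp_dist hconn hG hreg x f⟩

end Radial

/-- The coordinate `s_t(x)(z)` depends only on the distance `d(x,z)`: if
`d(x,z) = d(x,z')` then `s_t(x)(z) = s_t(x)(z')`. -/
theorem sVec_dist_invariant (V : Type*) (G : SimpleGraph V) (hconn : G.Connected)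
    (hacyc : G.IsAcyclic) (hreg : ∀ v : V, (G.neighborSet v).ncard = 3)
    (x : V) (t : ℕ) (z z' : V) (hd : G.dist x z = G.dist x z') :
    sVec G x t z = sVec G x t z' := by
  have hfin (v : V) : (G.neighborSet v).Finite := Set.finite_of_ncard_ne_zero (by simp [hreg])
  let : G.LocallyFinite := fun v => (hfin v).fintype
  have hreg' : G.IsRegularOfDegree 3 := fun v => by
    rw [← card_neighborSet_eq_degree, ← Nat.card_eq_fintype_card, Nat.card_coe_set_eq, hreg]
  obtain ⟨f, hf⟩ := exists_sVec_eq_comp_dist hconn hacyc hreg' x t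
  simp only [hf, Function.comp_apply, hd]
end

section
/- Let x and y be adjacent vertices of G and t a natural number. For every natural number s ≥ 0 and every vertex z with d(x,z) = s and d(y,z) = s+1, one has r_{2t}(x,y)(z) = u t s; and for every s ≥ 1 and every vertex z with d(x,z) = s and d(y,z) = s-1, one has r_{2t}(x,y)(z) = u t (-s). -/
open scoped Classical

/-- One step of the recursion defining `u`: given `u t`, first the values at odd
positions are computed from `u t`, then the values at even positions are computed from
`u t` and the new odd values. -/
def ustep (v : ℤ → ℤ) : ℤ → ℤ := fun s =>
  let w : ℤ → ℤ := fun s' =>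
    if s' < 0 then 2 * v (s' - 1) - v s' + v (s' + 1)
    else v (s' - 1) - v s' + 2 * v (s' + 1)
  if s % 2 = 0 then
    if s < 0 then 2 * w (s - 1) - v s + w (s + 1)
    else w (s - 1) - v s + 2 * w (s + 1)
  else w s

/-- The doubly infinite sequences `u t : ℤ → ℤ`: `u 0` is the indicator function of
`{0, -1}`, and `u (t+1)` is obtained from `u t` by the two-step reflection rule. -/
def u : ℕ → ℤ → ℤ
  | 0 => fun s => if s = 0 ∨ s = -1 then 1 else 0
  | t + 1 => ustep (u t)


section Aux
open SimpleGraph Walk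

variable {V : Type*} {G : SimpleGraph V}

lemma my_dist_eq_length (hacyc : G.IsAcyclic) {a b : V} (p : G.Walk a b) (hp : p.IsPath) :
    G.dist a b = p.length := by
  refine le_antisymm (SimpleGraph.dist_le p) ?_
  obtain ⟨q, hq⟩ := SimpleGraph.Reachable.exists_walk_length_eq_dist ⟨p⟩
  have h2 : q.bypass = p := congrArg Subtype.val
    (hacyc.path_unique ⟨q.bypass, q.bypass_isPath⟩ ⟨p, hp⟩)
  calc p.length = q.bypass.length := by rw [h2]
    _ ≤ q.length := q.length_bypass_le
    _ = G.dist a b := hq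

lemma my_dist_adj (hacyc : G.IsAcyclic) {a b : V} (h : G.Adj a b) : G.dist a b = 1 := by
  have := my_dist_eq_length hacyc (SimpleGraph.Path.singleton h).1 (SimpleGraph.Path.singleton h).2
  simpa [SimpleGraph.Path.singleton] using this

lemma my_adj_dist (hconn : G.Connected) (hacyc : G.IsAcyclic) (x : V) {z w : V}
    (h : G.Adj z w) : G.dist x w + 1 = G.dist x z ∨ G.dist x w = G.dist x z + 1 := by
  obtain ⟨q, hq⟩ := hconn.exists_walk_length_eq_dist z x
  set p := q.bypass with hpdef
  have hp : p.IsPath := q.bypass_isPath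
  have hlen : G.dist x z = p.length := by
    rw [SimpleGraph.dist_comm]; exact my_dist_eq_length hacyc p hp
  by_cases hw : w ∈ p.support
  · left
    have h1 : (p.takeUntil w hw).length = 1 := by
      have := my_dist_eq_length hacyc (p.takeUntil w hw) (hp.takeUntil hw)
      rw [my_dist_adj hacyc h] at this; omega
    have h2 : G.dist x w = (p.dropUntil w hw).length := by
      rw [SimpleGraph.dist_comm]; exact my_dist_eq_length hacyc _ (hp.dropUntil hw)
    have h3 : (p.takeUntil w hw).length + (p.dropUntil w hw).length = p.length := by
      rw [← SimpleGraph.Walk.length_append, p.take_spec hw]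
    omega
  · right
    have hp2 : (SimpleGraph.Walk.cons h.symm p).IsPath := hp.cons hw
    have := my_dist_eq_length hacyc _ hp2
    rw [SimpleGraph.dist_comm] at this
    simp only [SimpleGraph.Walk.length_cons] at this
    omega

lemma my_exists_parent (hconn : G.Connected) (hacyc : G.IsAcyclic) (x : V) {z : V}
    (hz : z ≠ x) : ∃ p, G.Adj z p ∧ G.dist x p + 1 = G.dist x z ∧
      ∀ w, G.Adj z w → G.dist x w + 1 = G.dist x z → w = p := by
  obtain ⟨q, hq⟩ := hconn.exists_walk_length_eq_dist z x
  have hp : q.bypass.IsPath := q.bypass_isPath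
  have hlen : G.dist x z = q.bypass.length := by
    rw [SimpleGraph.dist_comm]; exact my_dist_eq_length hacyc _ hp
  cases hpc : q.bypass with
  | nil => exact absurd rfl hz
  | @cons _ b _ hadj q' =>
    rw [hpc] at hp hlen
    rw [SimpleGraph.Walk.cons_isPath_iff] at hp
    obtain ⟨hq', hznot⟩ := hp
    have hdb : G.dist x b = q'.length := by
      rw [SimpleGraph.dist_comm]; exact my_dist_eq_length hacyc _ hq'
    refine ⟨b, hadj, by simp at hlen; omega, ?_⟩
    intro w hw hd
    obtain ⟨r0, hr0⟩ := hconn.exists_walk_length_eq_dist w x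
    have hrp : r0.bypass.IsPath := r0.bypass_isPath
    have hrlen : G.dist x w = r0.bypass.length := by
      rw [SimpleGraph.dist_comm]; exact my_dist_eq_length hacyc _ hrp
    have hznr : z ∉ r0.bypass.support := by
      intro hmem
      have h4 : (r0.bypass.dropUntil z hmem).length ≤ r0.bypass.length := by
        have := congrArg SimpleGraph.Walk.length (r0.bypass.take_spec hmem)
        rw [SimpleGraph.Walk.length_append] at this; omega
      have h5 : G.dist x z ≤ (r0.bypass.dropUntil z hmem).length := by
        rw [SimpleGraph.dist_comm]; exact SimpleGraph.dist_le _
      omega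
    have hcp : (SimpleGraph.Walk.cons hw r0.bypass).IsPath := hrp.cons hznr
    have heq : (SimpleGraph.Walk.cons hw r0.bypass) = SimpleGraph.Walk.cons hadj q' := by
      exact congrArg Subtype.val (hacyc.path_unique ⟨SimpleGraph.Walk.cons hw r0.bypass, hcp⟩
        ⟨SimpleGraph.Walk.cons hadj q', hq'.cons hznot⟩)
    have := congrArg (fun t => SimpleGraph.Walk.getVert t 1) heq
    simpa [SimpleGraph.Walk.getVert_cons_succ, SimpleGraph.Walk.getVert_zero] using this

/-- Signed distance predicate: `k ≥ 0` means `z` is at distance `k` from `x` on the `x` side,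
`k < 0` means `z` is at distance `-k` from `x` beyond `y`. -/
def mySig (G : SimpleGraph V) (x y z : V) (k : ℤ) : Prop :=
  ((G.dist x z : ℤ) = k ∧ (G.dist y z : ℤ) = k + 1) ∨
  ((G.dist x z : ℤ) = -k ∧ (G.dist y z : ℤ) = -k - 1)

lemma my_dist_succ (hconn : G.Connected) (hacyc : G.IsAcyclic) {x y : V} (hxy : G.Adj x y)
    (w : V) : G.dist y w = G.dist x w + 1 ∨ G.dist x w = G.dist y w + 1 := by
  have := my_adj_dist hconn hacyc w hxy
  rw [SimpleGraph.dist_comm (u := w) (v := x), SimpleGraph.dist_comm (u := w) (v := y)] at this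
  omega

lemma my_sig_exists (hconn : G.Connected) (hacyc : G.IsAcyclic) {x y : V} (hxy : G.Adj x y)
    (z : V) : ∃ k, mySig G x y z k := by
  rcases my_dist_succ hconn hacyc hxy z with h | h
  · exact ⟨(G.dist x z : ℤ), Or.inl ⟨rfl, by omega⟩⟩
  · exact ⟨-(G.dist x z : ℤ), Or.inr ⟨by omega, by omega⟩⟩

lemma my_nbr (hconn : G.Connected) (hacyc : G.IsAcyclic) {x y : V} (hxy : G.Adj x y)
    {z : V} {k : ℤ} (hz : mySig G x y z k) :
    ∃ p, G.Adj z p ∧ mySig G x y p (if 0 ≤ k then k - 1 else k + 1) ∧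
      ∀ w, G.Adj z w → w ≠ p → mySig G x y w (if 0 ≤ k then k + 1 else k - 1) := by
  have hdxy : G.dist x y = 1 := my_dist_adj hacyc hxy
  have hdyx : G.dist y x = 1 := my_dist_adj hacyc hxy.symm
  rcases le_or_gt 0 k with hk | hk
  · -- x side: dist x z = k, dist y z = k + 1
    have hz' : (G.dist x z : ℤ) = k ∧ (G.dist y z : ℤ) = k + 1 := by
      rcases hz with h | h
      · exact h
      · constructor <;> omega
    obtain ⟨hdx, hdy⟩ := hz'
    simp only [if_pos hk]
    rcases eq_or_lt_of_le hk with hk0 | hkpos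
    · -- k = 0, z = x
      have hzx : z = x := by
        have : G.dist x z = 0 := by omega
        exact (hconn.dist_eq_zero_iff.mp this).symm
      refine ⟨y, hzx ▸ hxy, ?_, ?_⟩
      · right
        constructor
        · rw [hdxy]; omega
        · rw [SimpleGraph.dist_eq_zero_iff_eq_or_not_reachable.mpr (Or.inl rfl)]; omega
      · intro w hw hwy
        have hdxw : G.dist x w = 1 := my_dist_adj hacyc (hzx ▸ hw)
        rcases my_dist_succ hconn hacyc hxy w with h | h
        · left; constructor <;> omega
        · exfalso
          have : G.dist y w = 0 := by omega
          exact hwy (hconn.dist_eq_zero_iff.mp this).symm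
    · -- k ≥ 1
      have hzx : z ≠ x := by
        intro h; subst h
        simp [SimpleGraph.dist_eq_zero_iff_eq_or_not_reachable.mpr (Or.inl rfl)] at hdx; omega
      have hzy : z ≠ y := by
        intro h; subst h
        simp [SimpleGraph.dist_eq_zero_iff_eq_or_not_reachable.mpr (Or.inl rfl)] at hdy; omega
      obtain ⟨p, hp, hpd, hpu⟩ := my_exists_parent hconn hacyc x hzx
      obtain ⟨q, hq, hqd, hqu⟩ := my_exists_parent hconn hacyc y hzy
      have hpy := my_adj_dist hconn hacyc y hp
      have hpsucc := my_dist_succ hconn hacyc hxy p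
      have hdyp : G.dist y p = G.dist x p + 1 := by omega
      have hpq : p = q := hqu p hp (by omega)
      refine ⟨p, hp, Or.inl ⟨by omega, by omega⟩, ?_⟩
      intro w hw hwp
      have hwx := my_adj_dist hconn hacyc x hw
      have hwy := my_adj_dist hconn hacyc y hw
      have hwsucc := my_dist_succ hconn hacyc hxy w
      have hdxw : G.dist x w = G.dist x z + 1 := by
        rcases hwx with h | h
        · exact absurd (hpu w hw h) hwp
        · exact h
      have hdyw : G.dist y w ≠ G.dist y z - 1 := by
        intro h
        exact hwp (hpq ▸ hqu w hw (by omega))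
      left; constructor <;> omega
  · -- y side: dist x z = -k, dist y z = -k - 1
    have hz' : (G.dist x z : ℤ) = -k ∧ (G.dist y z : ℤ) = -k - 1 := by
      rcases hz with h | h
      · constructor <;> omega
      · exact h
    obtain ⟨hdx, hdy⟩ := hz'
    simp only [if_neg (not_le.mpr hk)]
    have hzx : z ≠ x := by
      intro h; subst h
      simp [SimpleGraph.dist_eq_zero_iff_eq_or_not_reachable.mpr (Or.inl rfl)] at hdx; omega
    obtain ⟨p, hp, hpd, hpu⟩ := my_exists_parent hconn hacyc x hzx
    have hpy := my_adj_dist hconn hacyc y hp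
    have hpsucc := my_dist_succ hconn hacyc hxy p
    have hsigp : mySig G x y p (k + 1) := by
      rcases eq_or_lt_of_le (show k ≤ -1 by omega) with hk1 | hk2
      · -- k = -1 : z = y, p = x
        have hpx : p = x := by
          have : G.dist x p = 0 := by omega
          exact (hconn.dist_eq_zero_iff.mp this).symm
        left
        refine ⟨by omega, ?_⟩
        rw [hpx, hdyx]; omega
      · -- k ≤ -2: use the y-parent
        have hzy : z ≠ y := by
          intro h; subst h
          simp [SimpleGraph.dist_eq_zero_iff_eq_or_not_reachable.mpr (Or.inl rfl)] at hdy; omega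
        obtain ⟨q, hq, hqd, hqu⟩ := my_exists_parent hconn hacyc y hzy
        have hqx := my_adj_dist hconn hacyc x hq
        have hqsucc := my_dist_succ hconn hacyc hxy q
        have hdxq : G.dist x q = G.dist x z - 1 := by omega
        have hqp : q = p := hpu q hq (by omega)
        rw [hqp] at hqd
        right
        constructor <;> omega
    refine ⟨p, hp, hsigp, ?_⟩
    intro w hw hwp
    have hwx := my_adj_dist hconn hacyc x hw
    have hwy := my_adj_dist hconn hacyc y hw
    have hwsucc := my_dist_succ hconn hacyc hxy w
    have hdxw : G.dist x w = G.dist x z + 1 := by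
      rcases hwx with h | h
      · exact absurd (hpu w hw h) hwp
      · exact h
    right; constructor <;> omega

lemma my_finsum_neighbors {z : V} (h3 : (G.neighborSet z).ncard = 3) (afun : V → ℤ)
    {p : V} (hp : G.Adj z p) (f1 f2 : ℤ) (hpv : afun p = f1)
    (hw : ∀ w, G.Adj z w → w ≠ p → afun w = f2) :
    ∑ᶠ w ∈ G.neighborSet z, afun w = f1 + 2 * f2 := by
  obtain ⟨a, b, c, hab, hac, hbc, hset⟩ := Set.ncard_eq_three.mp h3
  have hcoe : G.neighborSet z = (({a, b, c} : Finset V) : Set V) := by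
    rw [hset]; simp
  rw [hcoe, finsum_mem_coe_finset]
  have hsum : ∑ w ∈ ({a, b, c} : Finset V), afun w = afun a + afun b + afun c := by
    rw [Finset.sum_insert (by simp [hab, hac]), Finset.sum_insert (by simp [hbc]),
      Finset.sum_singleton]
    ring
  have ha : G.Adj z a := by rw [← SimpleGraph.mem_neighborSet, hset]; simp
  have hb : G.Adj z b := by rw [← SimpleGraph.mem_neighborSet, hset]; simp
  have hc : G.Adj z c := by rw [← SimpleGraph.mem_neighborSet, hset]; simp
  have hpmem : p ∈ ({a, b, c} : Set V) := by rw [← hset]; exact hp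
  rw [hsum]
  simp only [Set.mem_insert_iff, Set.mem_singleton_iff] at hpmem
  rcases hpmem with h | h | h <;> subst h
  · rw [hpv, hw b hb (Ne.symm hab), hw c hc (Ne.symm hac)]; ring
  · rw [hpv, hw a ha hab, hw c hc (Ne.symm hbc)]; ring
  · rw [hpv, hw a ha hac, hw b hb hbc]; ring

/-- The half-step sequence: values of `r_{2t+1}` in terms of `u t`. -/
def uhalf (v : ℤ → ℤ) : ℤ → ℤ := fun s =>
  if s % 2 = 0 then v s
  else if s < 0 then 2 * v (s - 1) - v s + v (s + 1)
  else v (s - 1) - v s + 2 * v (s + 1)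

lemma my_ustep_odd (v : ℤ → ℤ) {s : ℤ} (h : s % 2 ≠ 0) : ustep v s = uhalf v s := by
  simp [ustep, uhalf, h]

lemma my_ustep_even (v : ℤ → ℤ) {s : ℤ} (h : s % 2 = 0) :
    ustep v s = if s < 0 then 2 * uhalf v (s - 1) - v s + uhalf v (s + 1)
      else uhalf v (s - 1) - v s + 2 * uhalf v (s + 1) := by
  have h1 : ¬((s - 1) % 2 = 0) := by omega
  have h2 : ¬((s + 1) % 2 = 0) := by omega
  simp only [ustep, uhalf, if_pos h, if_neg h1, if_neg h2]

lemma my_key (hconn : G.Connected) (hacyc : G.IsAcyclic)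
    (hreg : ∀ v : V, (G.neighborSet v).ncard = 3) {x y : V} (hxy : G.Adj x y) :
    ∀ t k (z : V), mySig G x y z k → rVec G x y (2 * t) z = u t k := by
  intro t
  induction t with
  | zero =>
    intro k z hz
    have hxz : z = x ↔ G.dist x z = 0 := by
      rw [hconn.dist_eq_zero_iff]; exact eq_comm
    have hyz : z = y ↔ G.dist y z = 0 := by
      rw [hconn.dist_eq_zero_iff]; exact eq_comm
    have hu0 : u 0 k = if k = 0 ∨ k = -1 then 1 else 0 := rfl
    have hr0 : rVec G x y (2 * 0) z
        = (if z = x then 1 else 0) + (if z = y then 1 else 0) := rfl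
    rw [hr0, hu0]
    by_cases h1 : z = x
    · have hk : k = 0 := by
        rw [hxz] at h1
        rcases hz with ⟨h, _⟩ | ⟨h, _⟩ <;> omega
      have h2 : z ≠ y := by
        intro h; rw [h1] at h; exact hxy.ne h
      simp [h1, h2, hk, hxy.ne]
    · by_cases h2 : z = y
      · have hd1 : G.dist x z = 1 := by rw [h2]; exact my_dist_adj hacyc hxy
        have hd0 : G.dist y z = 0 := hyz.mp h2
        have hk : k = -1 := by
          rcases hz with ⟨h, h'⟩ | ⟨h, h'⟩ <;> omega
        simp [h1, h2, hk, hxy.ne']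
      · have hd1 : G.dist x z ≠ 0 := fun h => h1 (hxz.mpr h)
        have hd2 : G.dist y z ≠ 0 := fun h => h2 (hyz.mpr h)
        have hk : ¬(k = 0 ∨ k = -1) := by
          rcases hz with ⟨h, h'⟩ | ⟨h, h'⟩ <;> omega
        simp [h1, h2, hk]
  | succ t ih =>
    have hodd : ∀ k (z : V), mySig G x y z k → rVec G x y (2 * t + 1) z = uhalf (u t) k := by
      intro k z hz
      obtain ⟨p, hpadj, hsigp, hfar⟩ := my_nbr hconn hacyc hxy hz
      have hre : rVec G x y (2 * t + 1) z = phiOdd G x (rVec G x y (2 * t)) z := by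
        simp only [rVec, even_two_mul, if_pos]
      have hpar : Odd (G.dist x z) ↔ k % 2 ≠ 0 := by
        rw [Nat.odd_iff]
        rcases hz with ⟨h, _⟩ | ⟨h, _⟩ <;> omega
      rw [hre]
      by_cases hop : Odd (G.dist x z)
      · have hk2 : k % 2 ≠ 0 := hpar.mp hop
        simp only [phiOdd, if_pos hop]
        rw [my_finsum_neighbors (hreg z) _ hpadj _ _ (ih _ _ hsigp)
          (fun w hw hwp => ih _ _ (hfar w hw hwp)), ih k z hz]
        simp only [uhalf, if_neg hk2]
        by_cases hk0 : 0 ≤ k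
        · simp only [if_pos hk0, if_neg (show ¬ k < 0 by omega)]; ring
        · simp only [if_neg hk0, if_pos (show k < 0 by omega)]; ring
      · have hk2 : ¬ k % 2 ≠ 0 := fun h => hop (hpar.mpr h)
        simp only [phiOdd, if_neg hop]
        rw [ih k z hz]
        simp only [uhalf, if_pos (by omega : k % 2 = 0)]
    intro k z hz
    obtain ⟨p, hpadj, hsigp, hfar⟩ := my_nbr hconn hacyc hxy hz
    have hre : rVec G x y (2 * (t + 1)) z = phiEven G x (rVec G x y (2 * t + 1)) z := by
      rw [show 2 * (t + 1) = (2 * t + 1) + 1 by ring]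
      simp only [rVec, Nat.even_add_one, even_two_mul, not_true, if_neg, if_false]
    have hpar : Even (G.dist x z) ↔ k % 2 = 0 := by
      rw [Nat.even_iff]
      rcases hz with ⟨h, _⟩ | ⟨h, _⟩ <;> omega
    have hu1 : u (t + 1) k = ustep (u t) k := rfl
    rw [hre, hu1]
    by_cases hep : Even (G.dist x z)
    · have hk2 : k % 2 = 0 := hpar.mp hep
      simp only [phiEven, if_pos hep]
      rw [my_finsum_neighbors (hreg z) _ hpadj _ _ (hodd _ _ hsigp)
        (fun w hw hwp => hodd _ _ (hfar w hw hwp)), hodd k z hz,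
        my_ustep_even (u t) hk2]
      have huk : uhalf (u t) k = u t k := by simp [uhalf, hk2]
      rw [huk]
      by_cases hk0 : 0 ≤ k
      · simp only [if_pos hk0, if_neg (show ¬ k < 0 by omega)]; ring
      · simp only [if_neg hk0, if_pos (show k < 0 by omega)]; ring
    · have hk2 : k % 2 ≠ 0 := fun h => hep (hpar.mpr h)
      simp only [phiEven, if_neg hep]
      rw [hodd k z hz, my_ustep_odd (u t) hk2]

end Aux

/-- For adjacent vertices `x`, `y`: the coordinate `r_{2t}(x,y)(z)` equals `u t s` for
vertices `z` at distance `s` from `x` not beyond `y` (i.e. `d(y,z) = s+1`), and equals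
`u t (-s)` for vertices `z` at distance `s ≥ 1` from `x` beyond `y`
(i.e. `d(y,z) = s-1`). -/
theorem rVec_eq_u (V : Type*) (G : SimpleGraph V) (hconn : G.Connected)
    (hacyc : G.IsAcyclic) (hreg : ∀ v : V, (G.neighborSet v).ncard = 3)
    (x y : V) (hxy : G.Adj x y) (t : ℕ) :
    (∀ (s : ℕ) (z : V), G.dist x z = s → G.dist y z = s + 1 →
      rVec G x y (2 * t) z = u t (s : ℤ)) ∧
    (∀ (s : ℕ), 1 ≤ s → ∀ z : V, G.dist x z = s → G.dist y z = s - 1 →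
      rVec G x y (2 * t) z = u t (-(s : ℤ))) := by
  constructor
  · intro s z h1 h2
    refine my_key hconn hacyc hreg hxy t (s : ℤ) z (Or.inl ⟨?_, ?_⟩)
    · exact_mod_cast congrArg Nat.cast h1
    · rw [h2]; push_cast; ring
  · intro s hs z h1 h2
    refine my_key hconn hacyc hreg hxy t (-(s : ℤ)) z (Or.inr ⟨?_, ?_⟩)
    · rw [h1]; ring
    · rw [h2]; omega
end
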